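/- Define f_k(t) for the discrete Schrödinger equation with h-mesh and initial datum f_k(0) = I_k(i/(2h²))/I_0(5/(2h²)). Then f_k(1) = e^{−2i/h²} I_k(5i/(2h²))/I_0(5/(2h²)), and hence |f_k(0)| ≤ I_k(1/(2h²))/I_0(1/(2h²)) and |f_k(1)| ≤ I_k(5/(2h²))/I_0(5/(2h²)). -/

import Mathlib

open MeasureTheory

/-- Modified Bessel function of integer order `k`, complex argument:
`I_k(z) = (1/π) ∫₀^π e^{z cos θ} cos(kθ) dθ`. -/
noncomputable def besselI (k : ℤ) (z : ℂ) : ℂ :=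
  (1 / (Real.pi : ℂ)) * ∫ θ in (0:ℝ)..Real.pi, Complex.exp (z * Real.cos θ) * Real.cos (k * θ)

/-- Modified Bessel function of integer order `k`, real argument. -/
noncomputable def besselIR (k : ℤ) (x : ℝ) : ℝ :=
  (1 / Real.pi) * ∫ θ in (0:ℝ)..Real.pi, Real.exp (x * Real.cos θ) * Real.cos (k * θ)

open AddCircle Real Nat
open scoped InnerProductSpace

/-!
The Bessel functions `I_k(z)` are the Fourier coefficients of `θ ↦ e^{z cos θ}` on `ℝ/2πℤ`. Since
`e^{(z+w) cos θ} = e^{z cos θ} e^{w cos θ}`, Parseval's identity turns the coefficients of the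
product into the convolution `∑ₘ I_m(z) I_{k-m}(w) = I_k(z+w)`; hence the prescribed solution is
`f_k(t) = e^{-2it/h²} I_k(i/(2h²) + 2it/h²) / I_0(5/(2h²))`. The bounds come from the Taylor
expansion `I_k(z) = π⁻¹ ∑ₙ cₙₖ zⁿ/n!` with moments `cₙₖ = ∫₀^π cosⁿθ cos kθ dθ ≥ 0`, which gives
`|I_k(z)| ≤ I_k(|z|)`, `I_k(x) ≥ 0` and the monotonicity of `I_0` on `[0, ∞)`.
-/

-- Parseval's identity `⟪u, f⟫ = ∑ₘ ⟪u, eₘ⟫ ⟪eₘ, f⟫` for `u = eₙ ḡ`.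
theorem fourierCoeff_mul {T : ℝ} [Fact (0 < T)] (f g : C(AddCircle T, ℂ)) (n : ℤ) :
    fourierCoeff (⇑(f * g)) n = ∑' m, fourierCoeff f m * fourierCoeff g (n - m) := by
  set u : C(AddCircle T, ℂ) := fourier n * star g
  have hu (m : ℤ) : ⟪ContinuousMap.toLp 2 haarAddCircle ℂ u, fourierBasis m⟫_ℂ =
      fourierCoeff g (n - m) := by
    rw [coe_fourierBasis, ContinuousMap.inner_toLp, fourierCoeff]
    congr 1 with x
    simp only [u, ContinuousMap.mul_apply, ContinuousMap.star_apply, smul_eq_mul]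
    rw [show -(n - m) = m + -n by ring, fourier_add, fourier_neg, map_mul, ← Complex.star_def,
      star_star]
    ring
  have hf (m : ℤ) : ⟪fourierBasis m, ContinuousMap.toLp 2 haarAddCircle ℂ f⟫_ℂ =
      fourierCoeff f m := by
    rw [← fourierBasis.repr_apply_apply, fourierBasis_repr, fourierCoeff_toLp]
  calc fourierCoeff (⇑(f * g)) n
      = ⟪ContinuousMap.toLp 2 haarAddCircle ℂ u, ContinuousMap.toLp 2 haarAddCircle ℂ f⟫_ℂ := by
        rw [ContinuousMap.inner_toLp, fourierCoeff]
        congr 1 with x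
        simp only [u, ContinuousMap.mul_apply, ContinuousMap.star_apply, smul_eq_mul, map_mul,
          fourier_neg]
        rw [← Complex.star_def, star_star]
        ring
    _ = ∑' m, fourierCoeff f m * fourierCoeff g (n - m) := by
        rw [← fourierBasis.tsum_inner_mul_inner]
        simp only [hu, hf, mul_comm]

local instance : Fact (0 < 2 * π) := ⟨two_pi_pos⟩

lemma fourier_coe_two_pi (n : ℤ) (θ : ℝ) :
    fourier n (θ : AddCircle (2 * π)) = Complex.exp (n * θ * Complex.I) := by
  rw [fourier_coe_apply]
  congr 1
  field_simp
  push_cast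
  ring

-- `fourier 1 x = e^{ix}`, so this is `θ ↦ e^{z cos θ}` on `ℝ/2πℤ`.
noncomputable def expCos (z : ℂ) : C(AddCircle (2 * π), ℂ) :=
  ⟨fun x => Complex.exp (z * (fourier 1 x).re), by fun_prop⟩

lemma expCos_coe (z : ℂ) (θ : ℝ) : expCos z θ = Complex.exp (z * cos θ) := by
  simp only [expCos, ContinuousMap.coe_mk, fourier_coe_two_pi, Int.cast_one, one_mul,
    Complex.exp_ofReal_mul_I_re]

lemma expCos_add (z w : ℂ) : expCos (z + w) = expCos z * expCos w := by
  ext x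
  simp [expCos, add_mul, Complex.exp_add]

lemma besselI_eq_fourierCoeff (k : ℤ) (z : ℂ) : besselI k z = fourierCoeff (expCos z) k := by
  set F : ℝ → ℂ := fun θ => Complex.exp (((-k : ℤ) : ℂ) * θ * Complex.I) * Complex.exp (z * cos θ)
  have hF : Continuous F := by fun_prop
  -- `θ ↦ e^{z cos θ}` is even.
  have hsym : ∫ θ in -π..π, F θ = 2 * ∫ θ in 0..π, Complex.exp (z * cos θ) * cos (k * θ) := by
    rw [← intervalIntegral.integral_add_adjacent_intervals (b := 0) (hF.intervalIntegrable _ _)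
      (hF.intervalIntegrable _ _), ← neg_zero, ← intervalIntegral.integral_comp_neg, neg_zero,
      ← intervalIntegral.integral_add ((hF.comp' continuous_neg).intervalIntegrable _ _)
        (hF.intervalIntegrable _ _), ← intervalIntegral.integral_const_mul]
    refine intervalIntegral.integral_congr fun θ _ => ?_
    simp only [F, Complex.ofReal_neg, Complex.ofReal_cos, Complex.cos]
    push_cast
    ring_nf
  rw [fourierCoeff_eq_intervalIntegral _ _ (-π), show -π + 2 * π = π by ring]
  simp only [fourier_coe_two_pi, expCos_coe, smul_eq_mul]
  rw [hsym, besselI, Complex.real_smul]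
  push_cast
  field_simp

theorem besselI_add (k : ℤ) (z w : ℂ) :
    ∑' m : ℤ, besselI m z * besselI (k - m) w = besselI k (z + w) := by
  simp only [besselI_eq_fourierCoeff, expCos_add, fourierCoeff_mul]

noncomputable def cosMoment (n : ℕ) (k : ℤ) : ℝ :=
  ∫ θ in 0..π, cos θ ^ n * cos (k * θ)

lemma cosMoment_zero (k : ℤ) : cosMoment 0 k = if k = 0 then π else 0 := by
  split_ifs with hk
  · simp [cosMoment, hk]
  · simp only [cosMoment, pow_zero, one_mul]
    rw [intervalIntegral.integral_comp_mul_left cos (Int.cast_ne_zero.mpr hk), integral_cos]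
    simp [sin_int_mul_pi]

lemma cosMoment_succ (n : ℕ) (k : ℤ) :
    cosMoment (n + 1) k = (cosMoment n (k + 1) + cosMoment n (k - 1)) / 2 := by
  simp only [cosMoment]
  rw [← intervalIntegral.integral_add ((by fun_prop : Continuous _).intervalIntegrable _ _)
    ((by fun_prop : Continuous _).intervalIntegrable _ _), ← intervalIntegral.integral_div]
  refine intervalIntegral.integral_congr fun θ _ => ?_
  push_cast
  rw [show ((k : ℝ) + 1) * θ = k * θ + θ by ring, show ((k : ℝ) - 1) * θ = k * θ - θ by ring,
    cos_add, cos_sub]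
  ring

lemma cosMoment_nonneg (n : ℕ) (k : ℤ) : 0 ≤ cosMoment n k := by
  induction n generalizing k with
  | zero => rw [cosMoment_zero]; split_ifs <;> positivity
  | succ n ih => rw [cosMoment_succ]; have := ih (k + 1); have := ih (k - 1); positivity

theorem hasSum_besselI (k : ℤ) (z : ℂ) :
    HasSum (fun n : ℕ => ((cosMoment n k / π : ℝ) : ℂ) * (z ^ n / n !)) (besselI k z) := by
  let f (n : ℕ) : C(ℝ, ℂ) :=
    ⟨fun θ => z ^ n / n ! * ((cos θ ^ n * cos (k * θ) : ℝ) : ℂ), by fun_prop⟩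
  let K : TopologicalSpace.Compacts ℝ := ⟨Set.uIcc 0 π, isCompact_uIcc⟩
  have hf : Summable fun n => ‖(f n).restrict K‖ := by
    refine .of_nonneg_of_le (fun _ => norm_nonneg _) (fun n => ?_)
      (Real.summable_pow_div_factorial ‖z‖)
    refine (ContinuousMap.norm_le _ (by positivity)).2 fun θ => ?_
    have hcos : |cos (θ : ℝ)| ^ n * |cos (k * (θ : ℝ))| ≤ 1 :=
      mul_le_one₀ (pow_le_one₀ (abs_nonneg _) (abs_cos_le_one _)) (abs_nonneg _) (abs_cos_le_one _)
    simp only [ContinuousMap.restrict_apply, f, ContinuousMap.coe_mk, norm_mul, norm_div, norm_pow,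
      Complex.norm_natCast, Complex.norm_real, Real.norm_eq_abs]
    exact mul_le_of_le_one_right (by positivity) hcos
  have hexp (θ : ℝ) : ∑' n, f n θ = Complex.exp (z * cos θ) * cos (k * θ) := by
    rw [Complex.exp_eq_exp_ℂ,
      ← ((NormedSpace.expSeries_div_hasSum_exp (z * cos θ)).mul_right _).tsum_eq]
    congr 1 with n
    simp only [f, ContinuousMap.coe_mk]
    push_cast
    ring
  have hint (n : ℕ) : 1 / (π : ℂ) * ∫ θ in 0..π, f n θ =
      ((cosMoment n k / π : ℝ) : ℂ) * (z ^ n / n !) := by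
    simp only [f, ContinuousMap.coe_mk, intervalIntegral.integral_const_mul,
      intervalIntegral.integral_ofReal, cosMoment]
    push_cast
    ring
  have := (intervalIntegral.hasSum_intervalIntegral_of_summable_norm hf).mul_left (1 / (π : ℂ))
  simp only [hint, hexp] at this
  exact this

lemma besselI_ofReal (k : ℤ) (x : ℝ) : besselI k x = besselIR k x := by
  rw [besselI, besselIR, Complex.ofReal_mul, ← intervalIntegral.integral_ofReal]
  push_cast
  rfl

theorem hasSum_besselIR (k : ℤ) (x : ℝ) :
    HasSum (fun n : ℕ => cosMoment n k / π * (x ^ n / n !)) (besselIR k x) := by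
  rw [← Complex.hasSum_ofReal, ← besselI_ofReal]
  exact_mod_cast hasSum_besselI k x

theorem norm_besselI_le (k : ℤ) (z : ℂ) : ‖besselI k z‖ ≤ besselIR k ‖z‖ := by
  refine (hasSum_besselI k z).norm_le_of_bounded (hasSum_besselIR k ‖z‖) fun n => ?_
  rw [norm_mul, norm_div, norm_pow, Complex.norm_natCast, Complex.norm_real, Real.norm_eq_abs,
    abs_of_nonneg (by have := cosMoment_nonneg n k; positivity)]

lemma besselIR_nonneg (k : ℤ) {x : ℝ} (hx : 0 ≤ x) : 0 ≤ besselIR k x :=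
  (hasSum_besselIR k x).nonneg fun n => by have := cosMoment_nonneg n k; positivity

lemma besselIR_zero_monotoneOn : MonotoneOn (besselIR 0) (Set.Ici 0) := fun x hx y _ hxy =>
  hasSum_le (fun n => by have := cosMoment_nonneg n 0; gcongr) (hasSum_besselIR 0 x)
    (hasSum_besselIR 0 y)

lemma besselIR_zero_zero : besselIR 0 0 = 1 := by
  simp [besselIR, pi_ne_zero]

lemma one_le_besselIR_zero {x : ℝ} (hx : 0 ≤ x) : 1 ≤ besselIR 0 x :=
  besselIR_zero_zero ▸ besselIR_zero_monotoneOn Set.self_mem_Ici hx hx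

lemma norm_besselI_ofReal_mul_I_div_le (k : ℤ) {y x : ℝ} (hy : 0 ≤ y) (hyx : y ≤ x) :
    ‖besselI k (y * Complex.I)‖ / besselIR 0 x ≤ besselIR k y / besselIR 0 y := by
  have hx : 0 ≤ x := hy.trans hyx
  calc ‖besselI k (y * Complex.I)‖ / besselIR 0 x ≤ besselIR k y / besselIR 0 x := by
        gcongr
        · exact besselIR_nonneg 0 hx
        · simpa [abs_of_nonneg hy] using norm_besselI_le k (y * Complex.I)
    _ ≤ besselIR k y / besselIR 0 y :=
        div_le_div_of_nonneg_left (besselIR_nonneg k hy)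
          (one_pos.trans_le (one_le_besselIR_zero hy)) (besselIR_zero_monotoneOn hy hx hyx)

theorem stmt_10_general (h : ℝ)
    (f : ℤ → ℝ → ℂ)
    (hf : ∀ (k : ℤ) (t : ℝ),
      f k t = Complex.exp (-2 * Complex.I * (t : ℂ) / (h : ℂ) ^ 2) *
        ∑' m : ℤ, (besselI m (Complex.I / (2 * (h : ℂ) ^ 2)) /
            (besselIR 0 (5 / (2 * h ^ 2)) : ℝ)) *
          besselI (k - m) (2 * Complex.I * (t : ℂ) / (h : ℂ) ^ 2)) :
    (∀ k : ℤ, f k 1 = Complex.exp (-2 * Complex.I / (h : ℂ) ^ 2) *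
        besselI k (5 * Complex.I / (2 * (h : ℂ) ^ 2)) / (besselIR 0 (5 / (2 * h ^ 2)) : ℝ)) ∧
    (∀ k : ℤ, ‖f k 0‖ ≤ besselIR k (1 / (2 * h ^ 2)) / besselIR 0 (1 / (2 * h ^ 2))) ∧
    (∀ k : ℤ, ‖f k 1‖ ≤ besselIR k (5 / (2 * h ^ 2)) / besselIR 0 (5 / (2 * h ^ 2))) := by
  set D := besselIR 0 (5 / (2 * h ^ 2))
  have hD : 0 ≤ D := besselIR_nonneg 0 (by positivity)
  have hsol (k : ℤ) (t : ℝ) : f k t = Complex.exp (-2 * Complex.I * t / h ^ 2) *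
      (besselI k (Complex.I / (2 * h ^ 2) + 2 * Complex.I * t / h ^ 2) / D) := by
    rw [hf, ← besselI_add, ← tsum_div_const]
    simp only [div_mul_eq_mul_div]
  have h1 (k : ℤ) : f k 1 = Complex.exp (-2 * Complex.I / h ^ 2) *
      besselI k (5 * Complex.I / (2 * h ^ 2)) / D := by
    rw [hsol]
    push_cast
    ring_nf
  refine ⟨h1, fun k => ?_, fun k => ?_⟩
  · have h0 : f k 0 = besselI k ((1 / (2 * h ^ 2) : ℝ) * Complex.I) / D := by
      simp only [hsol, Complex.ofReal_zero, mul_zero, zero_div, Complex.exp_zero, one_mul, add_zero]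
      push_cast
      ring_nf
    rw [h0, norm_div, Complex.norm_real, Real.norm_of_nonneg hD]
    exact norm_besselI_ofReal_mul_I_div_le k (by positivity) (by gcongr; norm_num)
  · rw [h1, norm_div, norm_mul, Complex.norm_real, Real.norm_of_nonneg hD,
      show -2 * Complex.I / h ^ 2 = ((-2 / h ^ 2 : ℝ) : ℂ) * Complex.I by push_cast; ring,
      Complex.norm_exp_ofReal_mul_I, one_mul,
      show 5 * Complex.I / (2 * h ^ 2) = ((5 / (2 * h ^ 2) : ℝ) : ℂ) * Complex.I by push_cast; ring]
    exact norm_besselI_ofReal_mul_I_div_le k (by positivity) le_rfl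

/-- The explicit solution of the discrete Schrödinger equation with initial datum
f_k(0) = I_k(i/(2h²))/I_0(5/(2h²)): at time 1 it equals
e^{-2i/h²} I_k(5i/(2h²))/I_0(5/(2h²)), with the stated Bessel bounds at times 0 and 1. -/
theorem stmt_10 (h : ℝ) (hh : 0 < h)
    (f : ℤ → ℝ → ℂ)
    (hf : ∀ (k : ℤ) (t : ℝ),
      f k t = Complex.exp (-2 * Complex.I * (t : ℂ) / (h : ℂ) ^ 2) *
        ∑' m : ℤ, (besselI m (Complex.I / (2 * (h : ℂ) ^ 2)) /
            (besselIR 0 (5 / (2 * h ^ 2)) : ℝ)) *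
          besselI (k - m) (2 * Complex.I * (t : ℂ) / (h : ℂ) ^ 2)) :
    (∀ k : ℤ, f k 1 = Complex.exp (-2 * Complex.I / (h : ℂ) ^ 2) *
        besselI k (5 * Complex.I / (2 * (h : ℂ) ^ 2)) / (besselIR 0 (5 / (2 * h ^ 2)) : ℝ)) ∧
    (∀ k : ℤ, ‖f k 0‖ ≤ besselIR k (1 / (2 * h ^ 2)) / besselIR 0 (1 / (2 * h ^ 2))) ∧
    (∀ k : ℤ, ‖f k 1‖ ≤ besselIR k (5 / (2 * h ^ 2)) / besselIR 0 (5 / (2 * h ^ 2))) :=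
  stmt_10_general h f hf
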